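/- (Lambert quadrilateral) Suppose u, v, w, z are nonzero vectors representing distinct projective points that are linearly dependent (coplanar projective points), with B(x,x) ≠ 0 for each of them, such that every pairwise projective quadrance among u, v, w, z is defined and nonzero, every projective spread among the projective lines they determine is defined (all denominators nonzero), and the projective spreads satisfy S(uv, uz) = S(vu, vw) = S(wv, wz) = 1. Set q = q(u,v) and p = q(v,w), and assume 1 − q·p ≠ 0. Then q(w,z) = q(1 − p)/(1 − q·p), q(u,z) = p(1 − q)/(1 − q·p), q(u,w) = q + p − q·p, q(v,z) = (q + p − 2q·p)/(1 − q·p), and S(zu, zw) = 1 − p·q. -/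

import Mathlib

/-- The projective quadrance between the projective points `[U]` and `[V]`. -/
def projQuadrance {F : Type*} [Field F] {M : Type*} [AddCommGroup M] [Module F M]
    (B : LinearMap.BilinForm F M) (U V : M) : F :=
  1 - (B U V) ^ 2 / (B U U * B V V)

/-- The projective spread between the projective lines `WU` and `WV`
(the spread at the vertex `[W]`). -/
def projSpread {F : Type*} [Field F] {M : Type*} [AddCommGroup M] [Module F M]
    (B : LinearMap.BilinForm F M) (W U V : M) : F :=
  1 - (B W W * B U V - B U W * B V W) ^ 2 /
      ((B U U * B W W - (B U W) ^ 2) * (B V V * B W W - (B V W) ^ 2))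

/-!
A spread equal to `1` says that the numerator of the spread vanishes. The right angle at `v`
makes `a_v` times the Gram determinant of `u, v, w` equal to
`(a_u a_v - b_uv²)(a_v a_w - b_vw²) ≠ 0`, so `u, v, w` span the plane and `z` lies in it.
In coordinates, the right angles at `u` and `w` then force `z` to be a multiple of
`z₀ = b_vw a_v u - b_uv b_vw v + b_uv a_v w`. Quadrances and spreads do not see scalings, and
all Gram entries of `z₀` are explicit, so the five formulas become identities between rational
functions of `a_u, a_v, a_w, b_uv, b_vw`.
-/

section

variable {F : Type*} [Field F] {M : Type*} [AddCommGroup M] [Module F M]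
  {B : LinearMap.BilinForm F M}

theorem projQuadrance_smul_right (U V : M) {c : F} (hc : c ≠ 0) :
    projQuadrance B U (c • V) = projQuadrance B U V := by
  simp only [projQuadrance, map_smul, LinearMap.smul_apply, smul_eq_mul]
  rw [mul_pow, show B U U * (c * (c * B V V)) = c ^ 2 * (B U U * B V V) by ring,
    mul_div_mul_left _ _ (pow_ne_zero 2 hc)]

theorem projSpread_smul_left (W U V : M) {c : F} (hc : c ≠ 0) :
    projSpread B (c • W) U V = projSpread B W U V := by
  simp only [projSpread, map_smul, LinearMap.smul_apply, smul_eq_mul]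
  rw [show (c * (c * B W W) * B U V - c * B U W * (c * B V W)) ^ 2 =
      (c ^ 2) ^ 2 * (B W W * B U V - B U W * B V W) ^ 2 by ring,
    show (B U U * (c * (c * B W W)) - (c * B U W) ^ 2) * (B V V * (c * (c * B W W)) -
      (c * B V W) ^ 2) = (c ^ 2) ^ 2 * ((B U U * B W W - B U W ^ 2) * (B V V * B W W - B V W ^ 2))
      by ring,
    mul_div_mul_left _ _ (pow_ne_zero 2 (pow_ne_zero 2 hc))]

theorem LinearMap.BilinForm.IsSymm.sub_sq_comm (hB : B.IsSymm) (x y : M) :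
    B y y * B x x - B y x ^ 2 = B x x * B y y - B x y ^ 2 := by
  rw [hB.eq y x, mul_comm]

theorem LinearMap.BilinForm.IsSymm.projSpread_eq_one_iff (hB : B.IsSymm) {W U V : M}
    (hU : B W W * B U U - B W U ^ 2 ≠ 0) (hV : B W W * B V V - B W V ^ 2 ≠ 0) :
    projSpread B W U V = 1 ↔ B W W * B U V = B W U * B W V := by
  rw [hB.sub_sq_comm] at hU hV
  rw [projSpread, sub_eq_self, div_eq_zero_iff, or_iff_left (mul_ne_zero hU hV),
    pow_eq_zero_iff two_ne_zero, sub_eq_zero, hB.eq U W, hB.eq V W]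

theorem LinearMap.BilinForm.linearIndependent_of_det_ne_zero {ι : Type*} [Fintype ι]
    [DecidableEq ι] {x : ι → M} (h : (Matrix.of fun i j ↦ B (x i) (x j)).det ≠ 0) :
    LinearIndependent F x := by
  rw [Fintype.linearIndependent_iff]
  intro c hc
  refine congrFun (Matrix.eq_zero_of_mulVec_eq_zero h (funext fun i ↦ ?_))
  simpa [Matrix.mulVec, dotProduct, map_sum, mul_comm] using congrArg (B (x i)) hc

theorem linearIndependent_of_right_angle (hB : B.IsSymm) {u v w : M}
    (huv : B u u * B v v - B u v ^ 2 ≠ 0) (hvw : B v v * B w w - B v w ^ 2 ≠ 0)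
    (hperp : B v v * B u w = B u v * B v w) :
    LinearIndependent F ![u, v, w] := by
  refine LinearMap.BilinForm.linearIndependent_of_det_ne_zero (B := B) fun hdet ↦
    mul_ne_zero huv hvw ?_
  have : B v v * (Matrix.of fun i j ↦ B (![u, v, w] i) (![u, v, w] j)).det =
      (B u u * B v v - B u v ^ 2) * (B v v * B w w - B v w ^ 2) := by
    simp only [Matrix.det_fin_three, Matrix.of_apply, Matrix.cons_val_zero, Matrix.cons_val_one,
      Matrix.cons_val_two, Matrix.head_cons, Matrix.tail_cons, hB.eq v u, hB.eq w u, hB.eq w v]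
    linear_combination (B u v * B v w - B v v * B u w) * hperp
  rw [← this, hdet, mul_zero]

theorem exists_eq_add_of_linearIndependent {u v w z : M} (hli : LinearIndependent F ![u, v, w])
    (hdep : ∃ a b c d : F, (a ≠ 0 ∨ b ≠ 0 ∨ c ≠ 0 ∨ d ≠ 0) ∧ a • u + b • v + c • w + d • z = 0) :
    ∃ α β γ : F, z = α • u + β • v + γ • w := by
  obtain ⟨a, b, c, d, hne, hsum⟩ := hdep
  have hd : d ≠ 0 := by
    rintro rfl
    have := Fintype.linearIndependent_iff.mp hli ![a, b, c]
      (by simpa [Fin.sum_univ_three, ← add_assoc] using hsum)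
    simp_all [Fin.forall_fin_succ]
  refine ⟨-a / d, -b / d, -c / d, ?_⟩
  rw [← inv_smul_smul₀ hd z, eq_neg_of_add_eq_zero_right hsum]
  module

/-- Up to scaling, the point of the plane `u v w` on the perpendicular to `uv` at `u` and on
the perpendicular to `vw` at `w`. -/
def lambertVertex (B : LinearMap.BilinForm F M) (u v w : M) : M :=
  (B v w * B v v) • u - (B u v * B v w) • v + (B u v * B v v) • w

theorem lambertVertex_of_left_eq_zero {u v w : M} (hbuv : B u v = 0) :
    lambertVertex B u v w = (B v w * B v v) • u := by
  simp [lambertVertex, hbuv]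

theorem lambertVertex_of_right_eq_zero {u v w : M} (hbvw : B v w = 0) :
    lambertVertex B u v w = (B u v * B v v) • w := by
  simp [lambertVertex, hbvw]

theorem smul_eq_smul_lambertVertex (hB : B.IsSymm) {u v w z : M} {α β γ : F}
    (huv : B u u * B v v - B u v ^ 2 ≠ 0) (hvw : B v v * B w w - B v w ^ 2 ≠ 0)
    (hperp_v : B v v * B u w = B u v * B v w) (hperp_u : B u u * B v z = B u v * B u z)
    (hperp_w : B w w * B v z = B v w * B w z) (hz : z = α • u + β • v + γ • w) :
    (B v w * B v v) • z = α • lambertVertex B u v w ∧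
      (B u v * B v v) • z = γ • lambertVertex B u v w := by
  have hBz : ∀ x, B x z = α * B x u + β * B x v + γ * B x w := fun x ↦ by
    simp [hz]
  rw [hBz, hBz, hB.eq v u] at hperp_u
  rw [hBz, hBz, hB.eq v u, hB.eq w u, hB.eq w v] at hperp_w
  have hβ : (B u u * B v v - B u v ^ 2) * (β * B v v + γ * B v w) = 0 := by
    linear_combination B v v * hperp_u + γ * B u v * hperp_v
  have hα : (B v v * B w w - B v w ^ 2) * (α * B u v + β * B v v) = 0 := by
    linear_combination B v v * hperp_w + α * B v w * hperp_v
  replace hβ := (mul_eq_zero.mp hβ).resolve_left huv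
  replace hα := (mul_eq_zero.mp hα).resolve_left hvw
  rw [hz, lambertVertex]
  constructor
  · linear_combination (norm := module) (B v w * hα) • v + (B v v * (hβ - hα)) • w
  · linear_combination (norm := module) (B u v * hβ) • v + (B v v * (hα - hβ)) • u

theorem exists_eq_smul_lambertVertex {u v w z : M} {α γ : F} (hz : z ≠ 0) (hav : B v v ≠ 0)
    (huz : ∀ c : F, z ≠ c • u) (hwz : ∀ c : F, z ≠ c • w) (hne : B u v ≠ 0 ∨ B v w ≠ 0)
    (hzα : (B v w * B v v) • z = α • lambertVertex B u v w)
    (hzγ : (B u v * B v v) • z = γ • lambertVertex B u v w) :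
    B u v ≠ 0 ∧ B v w ≠ 0 ∧ ∃ c : F, c ≠ 0 ∧ z = c • lambertVertex B u v w := by
  have hbvw : B v w ≠ 0 := by
    intro hbvw
    rw [lambertVertex_of_right_eq_zero hbvw, smul_comm] at hzγ
    have hbuv : B u v ≠ 0 := hne.resolve_right (not_not.mpr hbvw)
    exact hwz γ (smul_right_injective M (mul_ne_zero hbuv hav) hzγ)
  have hbuv : B u v ≠ 0 := by
    intro hbuv
    rw [lambertVertex_of_left_eq_zero hbuv, smul_comm] at hzα
    exact huz α (smul_right_injective M (mul_ne_zero hbvw hav) hzα)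
  have hscale : B v w * B v v ≠ 0 := mul_ne_zero hbvw hav
  have hα : α ≠ 0 := by
    rintro rfl
    rw [zero_smul, smul_eq_zero] at hzα
    exact hzα.elim hscale hz
  refine ⟨hbuv, hbvw, (B v w * B v v)⁻¹ * α, mul_ne_zero (inv_ne_zero hscale) hα, ?_⟩
  rw [← smul_smul, ← hzα, inv_smul_smul₀ hscale]

theorem apply_lambertVertex (hB : B.IsSymm) {u v w : M}
    (hperp : B v v * B u w = B u v * B v w) :
    B u (lambertVertex B u v w) = B v w * B v v * B u u ∧
      B v (lambertVertex B u v w) = B u v * B v w * B v v ∧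
      B w (lambertVertex B u v w) = B u v * B v v * B w w ∧
      B (lambertVertex B u v w) (lambertVertex B u v w) =
        B v v * (B u u * B v v * B v w ^ 2 - B u v ^ 2 * B v w ^ 2 +
          B v v * B w w * B u v ^ 2) := by
  have hleft : ∀ x, B (lambertVertex B u v w) x =
      B v w * B v v * B u x - B u v * B v w * B v x + B u v * B v v * B w x := fun x ↦ by
    simp [lambertVertex]
  have hBu : B u (lambertVertex B u v w) = B v w * B v v * B u u := by
    rw [← hB.eq, hleft, hB.eq v u, hB.eq w u]; linear_combination B u v * hperp
  have hBv : B v (lambertVertex B u v w) = B u v * B v w * B v v := by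
    rw [← hB.eq, hleft, hB.eq w v]; ring
  have hBw : B w (lambertVertex B u v w) = B u v * B v v * B w w := by
    rw [← hB.eq, hleft]; linear_combination B v w * hperp
  refine ⟨hBu, hBv, hBw, ?_⟩
  rw [hleft, hBu, hBv, hBw]; ring

theorem lambert_quadrilateral_lambertVertex (hB : B.IsSymm) {u v w : M} {q p : F}
    (hau : B u u ≠ 0) (hav : B v v ≠ 0) (haw : B w w ≠ 0) (hbuv : B u v ≠ 0) (hbvw : B v w ≠ 0)
    (huv : B u u * B v v - B u v ^ 2 ≠ 0) (hvw : B v v * B w w - B v w ^ 2 ≠ 0)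
    (hperp : B v v * B u w = B u v * B v w)
    (hq : projQuadrance B u v = q) (hp : projQuadrance B v w = p) (hqp : 1 - q * p ≠ 0) :
    projQuadrance B w (lambertVertex B u v w) = q * (1 - p) / (1 - q * p) ∧
      projQuadrance B u (lambertVertex B u v w) = p * (1 - q) / (1 - q * p) ∧
      projQuadrance B u w = q + p - q * p ∧
      projQuadrance B v (lambertVertex B u v w) = (q + p - 2 * q * p) / (1 - q * p) ∧
      projSpread B (lambertVertex B u v w) u w = 1 - p * q := by
  obtain ⟨hBu, hBv, hBw, hBz⟩ := apply_lambertVertex hB hperp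
  set N := B u u * B v v * B v w ^ 2 - B u v ^ 2 * B v w ^ 2 + B v v * B w w * B u v ^ 2
  have hN : 1 - q * p = N / (B u u * B v v ^ 2 * B w w) := by
    rw [← hq, ← hp, projQuadrance, projQuadrance]; field_simp; ring
  have hN0 : N ≠ 0 := fun h ↦ hqp (by rw [hN, h, zero_div])
  have huw : B u w = B u v * B v w / B v v := by rw [eq_div_iff hav, ← hperp]; ring
  have hzu : B u u * B (lambertVertex B u v w) (lambertVertex B u v w) -
      B u (lambertVertex B u v w) ^ 2 =
      B u u * B v v * B u v ^ 2 * (B v v * B w w - B v w ^ 2) := by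
    rw [hBu, hBz]; ring
  have hzw : B w w * B (lambertVertex B u v w) (lambertVertex B u v w) -
      B w (lambertVertex B u v w) ^ 2 =
      B w w * B v v * B v w ^ 2 * (B u u * B v v - B u v ^ 2) := by
    rw [hBw, hBz]; ring
  have hnum : B (lambertVertex B u v w) (lambertVertex B u v w) * B u w -
      B u (lambertVertex B u v w) * B w (lambertVertex B u v w) =
      -(B u v * B v w * (B u u * B v v - B u v ^ 2) * (B v v * B w w - B v w ^ 2)) := by
    rw [hBz, hBu, hBw, huw]; field_simp; ring
  have hS : projSpread B (lambertVertex B u v w) u w = 1 - p * q := by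
    rw [projSpread, hzu, hzw, hnum, ← hq, ← hp, projQuadrance, projQuadrance]
    have hXY := mul_ne_zero huv hvw
    field_simp
  rw [hN]
  subst hq hp
  refine ⟨?_, ?_, ?_, ?_, hS⟩
  all_goals
    simp only [projQuadrance, hBu, hBv, hBw, hBz, huw]
    field_simp
    ring

end

theorem lambert_quadrilateral_general
    {F : Type*} [Field F]
    {M : Type*} [AddCommGroup M] [Module F M]
    (B : LinearMap.BilinForm F M) (hsym : ∀ x y : M, B x y = B y x)
    (u v w z : M) (hz : z ≠ 0)
    (hau : B u u ≠ 0) (hav : B v v ≠ 0) (haw : B w w ≠ 0)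
    -- the four projective points are pairwise distinct
    (huz : ∀ c : F, z ≠ c • u)
    (hwz : ∀ c : F, z ≠ c • w)
    -- the four projective points are coplanar
    (hdep : ∃ a b c d : F, (a ≠ 0 ∨ b ≠ 0 ∨ c ≠ 0 ∨ d ≠ 0) ∧
      a • u + b • v + c • w + d • z = 0)
    -- all projective spreads are defined: all denominators are nonzero
    (hduv : B u u * B v v - (B u v) ^ 2 ≠ 0)
    (hduz : B u u * B z z - (B u z) ^ 2 ≠ 0) (hdvw : B v v * B w w - (B v w) ^ 2 ≠ 0)
    (hdwz : B w w * B z z - (B w z) ^ 2 ≠ 0)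
    -- the three right spreads
    (hSu : projSpread B u v z = 1) (hSv : projSpread B v u w = 1)
    (hSw : projSpread B w v z = 1)
    (q p : F) (hq : projQuadrance B u v = q) (hp : projQuadrance B v w = p)
    (hqp : 1 - q * p ≠ 0) :
    projQuadrance B w z = q * (1 - p) / (1 - q * p) ∧
      projQuadrance B u z = p * (1 - q) / (1 - q * p) ∧
      projQuadrance B u w = q + p - q * p ∧
      projQuadrance B v z = (q + p - 2 * q * p) / (1 - q * p) ∧
      projSpread B z u w = 1 - p * q := by
  have hB : B.IsSymm := ⟨hsym⟩
  have hperp_u := (hB.projSpread_eq_one_iff hduv hduz).mp hSu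
  have hperp_v : B v v * B u w = B u v * B v w := by
    rw [hsym u v]; exact (hB.projSpread_eq_one_iff (by rwa [hB.sub_sq_comm]) hdvw).mp hSv
  have hperp_w : B w w * B v z = B v w * B w z := by
    rw [hsym v w]; exact (hB.projSpread_eq_one_iff (by rwa [hB.sub_sq_comm]) hdwz).mp hSw
  obtain ⟨α, β, γ, hzuvw⟩ := exists_eq_add_of_linearIndependent
    (linearIndependent_of_right_angle hB hduv hdvw hperp_v) hdep
  obtain ⟨hzα, hzγ⟩ := smul_eq_smul_lambertVertex hB hduv hdvw hperp_v hperp_u hperp_w hzuvw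
  have hne : B u v ≠ 0 ∨ B v w ≠ 0 := by
    by_contra! h
    exact hqp (by simp [← hq, ← hp, projQuadrance, h.1, h.2])
  obtain ⟨hbuv, hbvw, c, hc, rfl⟩ := exists_eq_smul_lambertVertex hz hav huz hwz hne hzα hzγ
  rw [projQuadrance_smul_right _ _ hc, projQuadrance_smul_right _ _ hc,
    projQuadrance_smul_right _ _ hc, projSpread_smul_left _ _ _ hc]
  exact lambert_quadrilateral_lambertVertex hB hau hav haw hbuv hbvw hduv hdvw hperp_v hq hp hqp

theorem lambert_quadrilateral
    {F : Type*} [Field F] (hchar : (2 : F) ≠ 0)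
    {M : Type*} [AddCommGroup M] [Module F M]
    (B : LinearMap.BilinForm F M) (hsym : ∀ x y : M, B x y = B y x)
    (u v w z : M) (hu : u ≠ 0) (hv : v ≠ 0) (hw : w ≠ 0) (hz : z ≠ 0)
    (hau : B u u ≠ 0) (hav : B v v ≠ 0) (haw : B w w ≠ 0) (haz : B z z ≠ 0)
    -- the four projective points are pairwise distinct
    (huv : ∀ c : F, v ≠ c • u) (huw : ∀ c : F, w ≠ c • u) (huz : ∀ c : F, z ≠ c • u)
    (hvw : ∀ c : F, w ≠ c • v) (hvz : ∀ c : F, z ≠ c • v) (hwz : ∀ c : F, z ≠ c • w)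
    -- the four projective points are coplanar
    (hdep : ∃ a b c d : F, (a ≠ 0 ∨ b ≠ 0 ∨ c ≠ 0 ∨ d ≠ 0) ∧
      a • u + b • v + c • w + d • z = 0)
    -- all pairwise projective quadrances are nonzero
    (hquv : projQuadrance B u v ≠ 0) (hquw : projQuadrance B u w ≠ 0)
    (hquz : projQuadrance B u z ≠ 0) (hqvw : projQuadrance B v w ≠ 0)
    (hqvz : projQuadrance B v z ≠ 0) (hqwz : projQuadrance B w z ≠ 0)
    -- all projective spreads are defined: all denominators are nonzero
    (hduv : B u u * B v v - (B u v) ^ 2 ≠ 0) (hduw : B u u * B w w - (B u w) ^ 2 ≠ 0)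
    (hduz : B u u * B z z - (B u z) ^ 2 ≠ 0) (hdvw : B v v * B w w - (B v w) ^ 2 ≠ 0)
    (hdvz : B v v * B z z - (B v z) ^ 2 ≠ 0) (hdwz : B w w * B z z - (B w z) ^ 2 ≠ 0)
    -- the three right spreads
    (hSu : projSpread B u v z = 1) (hSv : projSpread B v u w = 1)
    (hSw : projSpread B w v z = 1)
    (q p : F) (hq : projQuadrance B u v = q) (hp : projQuadrance B v w = p)
    (hqp : 1 - q * p ≠ 0) :
    projQuadrance B w z = q * (1 - p) / (1 - q * p) ∧
      projQuadrance B u z = p * (1 - q) / (1 - q * p) ∧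
      projQuadrance B u w = q + p - q * p ∧
      projQuadrance B v z = (q + p - 2 * q * p) / (1 - q * p) ∧
      projSpread B z u w = 1 - p * q :=
  lambert_quadrilateral_general B hsym u v w z hz hau hav haw huz hwz hdep hduv hduz hdvw hdwz hSu
    hSv hSw q p hq hp hqp
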